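/- Let (Ω, F, P) be a probability space, let Δ : Ω → ℝ² be a random vector with E[‖Δ‖⁴] < ∞, E[Δ] = 0, and E[Δⱼ Δₖ] = σ² · δⱼₖ for all j, k ∈ {1,2} (i.e. the covariance matrix of Δ is σ² times the 2×2 identity), where σ ≥ 0. Let g ∈ ℝ² be a fixed vector, let C ≥ 0, let r : Ω → ℝ be measurable with |r(ω)| ≤ C‖Δ(ω)‖² almost surely, and set e := −⟨g, Δ⟩ + r. Then σ² ‖g‖² ≤ E[e²] + E[2C‖g‖‖Δ‖³ + C²‖Δ‖⁴]. -/

import Mathlib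

/-!
Expanding `⟨g, Δ⟩²` in coordinates, the isotropic second moments give `E[⟨g, Δ⟩²] = σ² ‖g‖²`.
Pointwise, `⟨g, Δ⟩² = e² + 2⟨g, Δ⟩ r - r² ≤ e² + 2 C ‖g‖ ‖Δ‖³`, and integrating this bound
(every term is integrable since `‖Δ‖ ∈ L⁴`) gives the claim.
-/

open MeasureTheory

theorem integral_inner_sq_of_isotropic {Ω ι : Type*} [MeasurableSpace Ω] {μ : Measure Ω}
    [Fintype ι] [DecidableEq ι] {Δ : Ω → EuclideanSpace ℝ ι} (hΔ : MemLp Δ 2 μ) {v : ℝ}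
    (hcov : ∀ j k, ∫ ω, Δ ω j * Δ ω k ∂μ = v * if j = k then 1 else 0)
    (g : EuclideanSpace ℝ ι) :
    ∫ ω, inner ℝ g (Δ ω) ^ 2 ∂μ = v * ‖g‖ ^ 2 := by
  have hcoord (j : ι) : MemLp (fun ω => Δ ω j) 2 μ :=
    (EuclideanSpace.proj (𝕜 := ℝ) j : EuclideanSpace ℝ ι →L[ℝ] ℝ).comp_memLp' hΔ
  have hexpand (ω : Ω) : inner ℝ g (Δ ω) ^ 2 = ∑ j, ∑ k, g j * g k * (Δ ω j * Δ ω k) := by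
    simp only [PiLp.inner_apply, RCLike.inner_apply, conj_trivial, sq, Finset.sum_mul_sum]
    exact Finset.sum_congr rfl fun j _ => Finset.sum_congr rfl fun k _ => by ring
  have hint (j k : ι) : Integrable (fun ω => g j * g k * (Δ ω j * Δ ω k)) μ :=
    ((hcoord j).integrable_mul (hcoord k)).const_mul _
  simp_rw [hexpand]
  rw [integral_finsetSum _ fun j _ => integrable_finsetSum _ fun k _ => hint j k]
  simp_rw [integral_finsetSum _ fun k _ => hint _ k, integral_const_mul, hcov]
  rw [← real_inner_self_eq_norm_sq]
  simp only [PiLp.inner_apply, RCLike.inner_apply, conj_trivial, mul_ite, mul_one, mul_zero,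
    Finset.sum_ite_eq, Finset.mem_univ, if_true, Finset.mul_sum]
  exact Finset.sum_congr rfl fun j _ => by ring

theorem inner_sq_le_sq_neg_inner_add {E : Type*} [NormedAddCommGroup E] [InnerProductSpace ℝ E]
    (g d : E) {r C : ℝ} (hr : |r| ≤ C * ‖d‖ ^ 2) :
    inner ℝ g d ^ 2 ≤ (-inner ℝ g d + r) ^ 2 + (2 * C * ‖g‖ * ‖d‖ ^ 3 + C ^ 2 * ‖d‖ ^ 4) := by
  have hcross : inner ℝ g d * r ≤ C * ‖g‖ * ‖d‖ ^ 3 :=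
    calc inner ℝ g d * r ≤ |inner ℝ g d| * |r| := (le_abs_self _).trans_eq (abs_mul _ _)
      _ ≤ (‖g‖ * ‖d‖) * (C * ‖d‖ ^ 2) :=
        mul_le_mul (abs_real_inner_le_norm g d) hr (abs_nonneg r) (by positivity)
      _ = C * ‖g‖ * ‖d‖ ^ 3 := by ring
  nlinarith [sq_nonneg r, sq_nonneg (C * ‖d‖ ^ 2)]

theorem stmt0_general {Ω : Type*} [MeasureSpace Ω] [IsProbabilityMeasure (volume : Measure Ω)]
    (Δ : Ω → EuclideanSpace ℝ (Fin 2)) (hΔmeas : Measurable Δ)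
    (hΔ4 : Integrable (fun ω => ‖Δ ω‖ ^ 4))
    (σ : ℝ)
    (hcov : ∀ j k : Fin 2, (∫ ω, Δ ω j * Δ ω k) = σ ^ 2 * (if j = k then (1 : ℝ) else 0))
    (g : EuclideanSpace ℝ (Fin 2)) (C : ℝ)
    (r : Ω → ℝ) (hrmeas : Measurable r)
    (hr : ∀ᵐ ω, |r ω| ≤ C * ‖Δ ω‖ ^ 2)
    (e : Ω → ℝ) (he : ∀ ω, e ω = -(inner ℝ g (Δ ω) : ℝ) + r ω) :
    σ ^ 2 * ‖g‖ ^ 2 ≤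
      (∫ ω, (e ω) ^ 2) + ∫ ω, (2 * C * ‖g‖ * ‖Δ ω‖ ^ 3 + C ^ 2 * ‖Δ ω‖ ^ 4) := by
  simp only [he]
  have hΔ : AEStronglyMeasurable Δ := hΔmeas.aestronglyMeasurable
  have hΔ2 : MemLp Δ 2 :=
    (memLp_two_iff_integrable_sq_norm hΔ).2 (integrable_norm_pow_of_le hΔ (by norm_num) hΔ4)
  have hΔ3 : Integrable fun ω => ‖Δ ω‖ ^ 3 := integrable_norm_pow_of_le hΔ (by norm_num) hΔ4
  have hinner : MemLp (fun ω => inner ℝ g (Δ ω)) 2 := hΔ2.const_inner (𝕜 := ℝ) g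
  have hΔsq : MemLp (fun ω => ‖Δ ω‖ ^ 2) 2 :=
    (memLp_two_iff_integrable_sq (by fun_prop)).2 (by simpa only [← pow_mul] using hΔ4)
  have hr2 : MemLp r 2 := hΔsq.of_le_mul (c := C) hrmeas.aestronglyMeasurable
    (hr.mono fun ω h => by rwa [Real.norm_eq_abs, norm_pow, norm_norm])
  have he2 : Integrable fun ω => (-inner ℝ g (Δ ω) + r ω) ^ 2 := (hinner.neg.add hr2).integrable_sq
  have hbound : Integrable fun ω => 2 * C * ‖g‖ * ‖Δ ω‖ ^ 3 + C ^ 2 * ‖Δ ω‖ ^ 4 :=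
    (hΔ3.const_mul _).add (hΔ4.const_mul _)
  calc σ ^ 2 * ‖g‖ ^ 2 = ∫ ω, inner ℝ g (Δ ω) ^ 2 :=
        (integral_inner_sq_of_isotropic hΔ2 hcov g).symm
    _ ≤ ∫ ω, ((-inner ℝ g (Δ ω) + r ω) ^ 2 + (2 * C * ‖g‖ * ‖Δ ω‖ ^ 3 + C ^ 2 * ‖Δ ω‖ ^ 4)) :=
      integral_mono_ae hinner.integrable_sq (he2.add hbound)
        (hr.mono fun ω h => inner_sq_le_sq_neg_inner_add g (Δ ω) h)
    _ = _ := integral_add he2 hbound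

theorem stmt0 {Ω : Type*} [MeasureSpace Ω] [IsProbabilityMeasure (volume : Measure Ω)]
    (Δ : Ω → EuclideanSpace ℝ (Fin 2)) (hΔmeas : Measurable Δ)
    (hΔ4 : Integrable (fun ω => ‖Δ ω‖ ^ 4))
    (hmean : (∫ ω, Δ ω) = 0)
    (σ : ℝ) (hσ : 0 ≤ σ)
    (hcov : ∀ j k : Fin 2, (∫ ω, Δ ω j * Δ ω k) = σ ^ 2 * (if j = k then (1 : ℝ) else 0))
    (g : EuclideanSpace ℝ (Fin 2)) (C : ℝ) (hC : 0 ≤ C)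
    (r : Ω → ℝ) (hrmeas : Measurable r)
    (hr : ∀ᵐ ω, |r ω| ≤ C * ‖Δ ω‖ ^ 2)
    (e : Ω → ℝ) (he : ∀ ω, e ω = -(inner ℝ g (Δ ω) : ℝ) + r ω) :
    σ ^ 2 * ‖g‖ ^ 2 ≤
      (∫ ω, (e ω) ^ 2) + ∫ ω, (2 * C * ‖g‖ * ‖Δ ω‖ ^ 3 + C ^ 2 * ‖Δ ω‖ ^ 4) :=
  stmt0_general Δ hΔmeas hΔ4 σ hcov g C r hrmeas hr e he
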